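/- arXiv:2411.03118 — 3 statements merged into one kernel-verified Lean document; each statement's English description precedes it below -/
import Mathlib

section
/- For all integers n ≥ 1 and i with 1 ≤ i ≤ p^n, and every x ∈ L, one has ‖(binom(p^n, i)/p^n) · x^i − ((−1)^{i−1}/i) · x^i‖ ≤ p^{−n} · p^{i/(p−1)} · ‖x‖^i, where binom(p^n, i) denotes the binomial coefficient. (This is the term-by-term estimate the paper proves, via the identity binom(p^n,i)/p^n − (−1)^{i−1}/i = [(p^n−1)(p^n−2)⋯(p^n−i+1) − (−1)^{i−1}(i−1)!]/i!, the divisibility of the numerator by p^n, and the bound v_p(i!) ≤ i/(p−1).) -/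
/-!
Write `i = k + 1` and `m = p ^ n`. Since `(k + 1)! · C(m, k + 1) = m · (m - 1)⋯(m - k)`, the
coefficient `C(m, k + 1)/m - (-1)^k/(k + 1)` equals `((m - 1)⋯(m - k) - (-1)^k k!)/(k + 1)!`.
Modulo `m` each factor `m - j` is `-j`, so the numerator is divisible by `p ^ n`, while Legendre's
formula gives `(p - 1) · v_p((k + 1)!) ≤ k + 1`. Since `f` is isometric, the estimate in `L`
is the same estimate in `ℚ_p`.
-/

open Nat

theorem Nat.cast_descFactorial_pred_eq (m : ℕ) {k : ℕ} (hk : k ≤ m) :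
    ((m - 1).descFactorial k : ZMod m) = (-1) ^ k * k ! := by
  induction k with
  | zero => simp
  | succ k ih =>
    rw [descFactorial_succ, cast_mul, ih (by omega), Nat.sub_sub, add_comm, cast_sub hk,
      ZMod.natCast_self, factorial_succ]
    push_cast
    ring

theorem Nat.choose_succ_div_sub_eq {K : Type*} [Field K] [CharZero K] {m : ℕ} (hm : m ≠ 0)
    (k : ℕ) :
    (m.choose (k + 1) : K) / m - (-1) ^ k / (k + 1 : ℕ) =
      ((((m - 1).descFactorial k : ℤ) - (-1) ^ k * k ! : ℤ) : K) / (k + 1)! := by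
  have h : (k + 1)! * m.choose (k + 1) = m * (m - 1).descFactorial k := by
    obtain ⟨m, rfl⟩ := exists_eq_succ_of_ne_zero hm
    rw [← descFactorial_eq_factorial_mul_choose, succ_descFactorial_succ, succ_sub_one]
  have h' : ((k + 1)! : K) * m.choose (k + 1) = m * (m - 1).descFactorial k := by exact_mod_cast h
  rw [div_sub_div _ _ (cast_ne_zero.mpr hm) (cast_ne_zero.mpr k.succ_ne_zero),
    div_eq_div_iff (mul_ne_zero (cast_ne_zero.mpr hm) (cast_ne_zero.mpr k.succ_ne_zero))
      (cast_ne_zero.mpr (factorial_ne_zero _))]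
  push_cast [factorial_succ] at h' ⊢
  linear_combination ((k : K) + 1) * h'

theorem Padic.norm_factorial_inv_le (p : ℕ) [hp : Fact p.Prime] (i : ℕ) :
    ‖(i ! : ℚ_[p])‖⁻¹ ≤ (p : ℝ) ^ ((i : ℝ) / ((p : ℝ) - 1)) := by
  have hp1 : (1 : ℝ) < p := by exact_mod_cast hp.out.one_lt
  have hv : ((p - 1) * padicValNat p i ! : ℕ) ≤ i := by
    rw [sub_one_mul_padicValNat_factorial]; omega
  rw [norm_eq_zpow_neg_valuation (cast_ne_zero.mpr (factorial_ne_zero _)), valuation_natCast,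
    zpow_neg, inv_inv, zpow_natCast, ← Real.rpow_natCast]
  refine Real.rpow_le_rpow_of_exponent_le hp1.le ?_
  rw [le_div_iff₀ (by linarith)]
  rw [← cast_le (α := ℝ), cast_mul, cast_sub hp.out.one_le] at hv
  push_cast at hv
  linarith

theorem Padic.norm_choose_div_sub_le {p : ℕ} [hp : Fact p.Prime] {n i : ℕ} (hi1 : 1 ≤ i)
    (hi2 : i ≤ p ^ n) :
    ‖((p ^ n).choose i : ℚ_[p]) / (p : ℚ_[p]) ^ n - (-1) ^ (i - 1) / (i : ℚ_[p])‖ ≤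
      (p : ℝ) ^ (-(n : ℝ)) * (p : ℝ) ^ ((i : ℝ) / ((p : ℝ) - 1)) := by
  obtain ⟨k, rfl⟩ : ∃ k, i = k + 1 := ⟨i - 1, by omega⟩
  have hdvd : ((p ^ n : ℕ) : ℤ) ∣ (p ^ n - 1).descFactorial k - (-1) ^ k * k ! := by
    rw [← ZMod.intCast_zmod_eq_zero_iff_dvd]
    push_cast
    rw [cast_descFactorial_pred_eq _ (by omega), sub_self]
  rw [← cast_pow, add_tsub_cancel_right, choose_succ_div_sub_eq (pow_ne_zero _ hp.out.ne_zero),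
    norm_div, div_eq_mul_inv]
  refine mul_le_mul ?_ (norm_factorial_inv_le p _) (by positivity) (by positivity)
  rw [show -(n : ℝ) = ((-n : ℤ) : ℝ) by push_cast; rfl, Real.rpow_intCast]
  exact (norm_int_le_pow_iff_dvd _ _).mpr (mod_cast hdvd)

theorem padic_log_term_estimate_general
    (p : ℕ) [Fact p.Prime] (L : Type*) [NormedField L]
    (f : ℚ_[p] →+* L) (hf : ∀ q : ℚ_[p], ‖f q‖ = ‖q‖)
    (n i : ℕ) (hi1 : 1 ≤ i) (hi2 : i ≤ p ^ n) (x : L) :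
    ‖(((p ^ n).choose i : L) / (p : L) ^ n) * x ^ i - ((-1 : L) ^ (i - 1) / (i : L)) * x ^ i‖ ≤
      (p : ℝ) ^ (-(n : ℝ)) * (p : ℝ) ^ ((i : ℝ) / ((p : ℝ) - 1)) * ‖x‖ ^ i := by
  have hcoeff : ((p ^ n).choose i : L) / (p : L) ^ n - (-1 : L) ^ (i - 1) / (i : L) =
      f (((p ^ n).choose i : ℚ_[p]) / (p : ℚ_[p]) ^ n - (-1) ^ (i - 1) / (i : ℚ_[p])) := by
    simp
  rw [← sub_mul, norm_mul, norm_pow, hcoeff, hf]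
  gcongr
  exact Padic.norm_choose_div_sub_le hi1 hi2

/-- **Term-by-term estimate in the computation of the logarithm of `μ_{p^∞}`.**
Let `p` be a prime and `L` a complete nonarchimedean normed field equipped with a ring
homomorphism `ℚ_p → L` along which the norm restricts to the standard `p`-adic absolute value
(so `‖p‖ = p⁻¹` in `L`).  For all integers `n ≥ 1` and `1 ≤ i ≤ p^n` and every `x ∈ L`,
`‖(C(p^n, i)/p^n)·x^i − ((−1)^{i−1}/i)·x^i‖ ≤ p^{−n} · p^{i/(p−1)} · ‖x‖^i`,
where `C(p^n, i)` is the binomial coefficient. -/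
theorem padic_log_term_estimate
    (p : ℕ) [Fact p.Prime] (L : Type*) [NormedField L] [CompleteSpace L]
    [IsUltrametricDist L] (f : ℚ_[p] →+* L) (hf : ∀ q : ℚ_[p], ‖f q‖ = ‖q‖)
    (n i : ℕ) (hn : 1 ≤ n) (hi1 : 1 ≤ i) (hi2 : i ≤ p ^ n) (x : L) :
    ‖(((p ^ n).choose i : L) / (p : L) ^ n) * x ^ i - ((-1 : L) ^ (i - 1) / (i : L)) * x ^ i‖ ≤
      (p : ℝ) ^ (-(n : ℝ)) * (p : ℝ) ^ ((i : ℝ) / ((p : ℝ) - 1)) * ‖x‖ ^ i :=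
  padic_log_term_estimate_general p L f hf n i hi1 hi2 x
end

section
/- Multiplication by p is a surjective endomorphism of the O_K̄-module of Kähler differentials Ω = Ω_{O_K̄ / O_K}; consequently, multiplication by p^n is surjective on Ω for every n ≥ 1. (This is the surjectivity claim the paper uses, via the snake lemma, to produce the exact sequences 0 → Ω[p^n] → A/p^nA → O_K̄/p^nO_K̄ → 0 in its geometric interpretation of the period ring A₂; it holds because every element of O_K̄ admits a p-th root in O_K̄.) -/
/-! Every `a ∈ O_K̄` is a `p`-th power `b ^ p`, so `d a = p • (b ^ (p - 1) • d b)`. Since the image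
of multiplication by `p` is an `O_K̄`-submodule and `Ω` is spanned by the `d a`, multiplication by
`p` is surjective; surjectivity of multiplication by `p ^ n` follows by iteration. -/

theorem KaehlerDifferential.nsmul_surjective_of_forall_exists_pow_eq (R S : Type*) [CommRing R]
    [CommRing S] [Algebra R S] (n : ℕ) (h : ∀ a : S, ∃ b, b ^ n = a) :
    Function.Surjective (fun ω : Ω[S⁄R] => n • ω) := by
  have hD : Set.range (D R S) ⊆ LinearMap.range (n • LinearMap.id : Ω[S⁄R] →ₗ[S] Ω[S⁄R]) := by
    rintro _ ⟨a, rfl⟩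
    obtain ⟨b, rfl⟩ := h a
    exact ⟨b ^ (n - 1) • D R S b, (Derivation.leibniz_pow (D R S) b n).symm⟩
  intro ω
  have hω : ω ∈ Submodule.span S (Set.range (D R S)) := by
    rw [span_range_derivation]; exact Submodule.mem_top
  exact (Submodule.span_le.mpr hD) hω

theorem integralClosure.exists_pow_eq_of_isAlgClosed {R L : Type*} [CommRing R] [Field L]
    [IsAlgClosed L] [Algebra R L] {n : ℕ} (hn : 0 < n) (a : integralClosure R L) :
    ∃ b : integralClosure R L, b ^ n = a := by
  obtain ⟨z, hz⟩ := IsAlgClosed.exists_pow_nat_eq (a : L) hn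
  exact ⟨⟨z, IsIntegral.of_pow hn (hz ▸ a.2)⟩, Subtype.ext hz⟩

theorem Function.Surjective.pow_nsmul {M : Type*} [AddMonoid M] {n : ℕ}
    (h : Function.Surjective (fun x : M => n • x)) (k : ℕ) :
    Function.Surjective (fun x : M => n ^ k • x) := by
  rw [← smul_iterate]
  exact h.iterate k

theorem kaehlerDifferential_mul_prime_surjective_general
    (p : ℕ) [Fact p.Prime] (K Kbar : Type*) [Field K] [Field Kbar]
    [Algebra K Kbar] [IsAlgClosure K Kbar]
    [Algebra ℤ_[p] K] :
    Function.Surjective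
        (fun ω : KaehlerDifferential (integralClosure ℤ_[p] K)
            (integralClosure (integralClosure ℤ_[p] K) Kbar) => p • ω) ∧
      ∀ n : ℕ, 1 ≤ n →
        Function.Surjective
          (fun ω : KaehlerDifferential (integralClosure ℤ_[p] K)
              (integralClosure (integralClosure ℤ_[p] K) Kbar) => p ^ n • ω) := by
  have : IsAlgClosed Kbar := IsAlgClosure.isAlgClosed K
  have hsurj := KaehlerDifferential.nsmul_surjective_of_forall_exists_pow_eq
    (integralClosure ℤ_[p] K) (integralClosure (integralClosure ℤ_[p] K) Kbar) p
    (integralClosure.exists_pow_eq_of_isAlgClosed (Fact.out : p.Prime).pos)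
  exact ⟨hsurj, fun n _ => hsurj.pow_nsmul n⟩

/-- **Multiplication by `p` is surjective on `Ω_{O_K̄ / O_K}`.**
Let `p` be a prime, `K` a finite extension of `ℚ_p` with valuation ring
`O_K = integralClosure ℤ_p K`, `K̄` an algebraic closure of `K`, and
`O_K̄ = integralClosure O_K K̄`.  Then multiplication by `p` is a surjective endomorphism of
the `O_K̄`-module of Kähler differentials `Ω = Ω_{O_K̄ / O_K}`; consequently multiplication by
`p^n` is surjective on `Ω` for every `n ≥ 1`. -/
theorem kaehlerDifferential_mul_prime_surjective
    (p : ℕ) [Fact p.Prime] (K Kbar : Type*) [Field K] [Field Kbar]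
    [Algebra ℚ_[p] K] [FiniteDimensional ℚ_[p] K]
    [Algebra K Kbar] [IsAlgClosure K Kbar]
    [Algebra ℤ_[p] K] [IsScalarTower ℤ_[p] ℚ_[p] K] :
    Function.Surjective
        (fun ω : KaehlerDifferential (integralClosure ℤ_[p] K)
            (integralClosure (integralClosure ℤ_[p] K) Kbar) => p • ω) ∧
      ∀ n : ℕ, 1 ≤ n →
        Function.Surjective
          (fun ω : KaehlerDifferential (integralClosure ℤ_[p] K)
              (integralClosure (integralClosure ℤ_[p] K) Kbar) => p ^ n • ω) :=
  kaehlerDifferential_mul_prime_surjective_general p K Kbar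
end

section
/- Assume in addition that C is an abelian category, that F is an exact covariant functor and that G is an exact contravariant functor. Then for every short exact sequence 0 → X₁ → X → X₂ → 0 in C, one has P_H(X₁) ⊆ P_H(X) and P_H(X₂) ⊆ P_H(X). (This is the inclusion P_H⟨X₁⟩ + P_H⟨X₂⟩ ⊆ P_H⟨X⟩ established in the paper's proof that for abelian C the period space of the subcategory generated by X equals P_H⟨X⟩.) -/
open CategoryTheory CategoryTheory.Limits TensorProduct

noncomputable section

universe w v u

/-- The canonical evaluation map: an element `γ` of `B ⊗[L] Hom_L(M, L)` is regarded as a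
`B`-linear functional on `B ⊗[L] M`, via `(b ⊗ φ)(b' ⊗ m) = b·b'·φ(m)`. -/
def dualEval (L B : Type u) [Field L] [CommRing B] [Algebra L B]
    (M : Type u) [AddCommGroup M] [Module L M] :
    (B ⊗[L] Module.Dual L M) →ₗ[B] ((B ⊗[L] M) →ₗ[B] B) :=
  LinearMap.liftBaseChange B
    (((LinearMap.liftBaseChangeEquiv B).toLinearMap.restrictScalars L).comp
      (LinearMap.llcomp L M L B (Algebra.linearMap L B)))

variable (K L B : Type u) [Field K] [Field L] [CommRing B]
  [Algebra K B] [Algebra L B] [Algebra ℚ B]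
variable (U : Subring B)
variable (C : Type v) [Category.{w} C] [Abelian C]

/-- A period pairing `H = (F, G)` for an additive functor `T : C ⥤ Mod^B_{K,L}` to the
realisation category.  The functor `T` is recorded through its two components
`T_K : C ⥤ Vect_K` and `T_L : C ⥤ Vect_L` (with finite-dimensional values) together with the
`B`-linear comparison isomorphisms `ϖ_X : T_K(X) ⊗_K B ≃ T_L(X) ⊗_L B`, natural in `X`.
`F` assigns to each object `X` a `ℚ`-linear subspace of `T_K(X) ⊗_K B` and `G` a `U`-linear
subspace of `Hom_L(T_L(X), L) ⊗_L B`, naturally in `X`: `F(f)` is the restriction of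
`T_K(f) ⊗ id_B` and `G(f)` is the restriction of `(T_L(f))^∨ ⊗ id_B`.  The subfield `U ⊆ B`
is an algebraic extension of `ℚ` inside `B`. -/
structure PeriodPairing where
  /-- the `K`-linear component of the realisation functor -/
  TK : C ⥤ ModuleCat.{u} K
  /-- the `L`-linear component of the realisation functor -/
  TL : C ⥤ ModuleCat.{u} L
  TK_additive : TK.Additive
  TL_additive : TL.Additive
  finK : ∀ X : C, FiniteDimensional K (TK.obj X)
  finL : ∀ X : C, FiniteDimensional L (TL.obj X)
  /-- the `B`-linear comparison isomorphism `ϖ_X` -/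
  ϖ : ∀ X : C, (B ⊗[K] TK.obj X) ≃ₗ[B] (B ⊗[L] TL.obj X)
  /-- `ϖ` is natural in `X` -/
  ϖ_natural : ∀ {X Y : C} (f : X ⟶ Y) (v : B ⊗[K] TK.obj X),
    ϖ Y (LinearMap.baseChange B (TK.map f).hom v) = LinearMap.baseChange B (TL.map f).hom (ϖ X v)
  /-- `U` is a subfield of `B` -/
  Ufield : IsField U
  /-- `U` is algebraic over `ℚ` -/
  Ualg : ∀ u : U, IsAlgebraic ℚ (u : B)
  /-- `F(X)` is a `ℚ`-linear subspace of `T_K(X) ⊗_K B` -/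
  F : ∀ X : C, AddSubgroup (B ⊗[K] TK.obj X)
  F_smul : ∀ (X : C) (q : ℚ) (v : B ⊗[K] TK.obj X), v ∈ F X → algebraMap ℚ B q • v ∈ F X
  /-- `T_K(f) ⊗ id_B` maps `F(X)` into `F(Y)`; `F(f)` is its restriction -/
  F_map : ∀ {X Y : C} (f : X ⟶ Y) (v : B ⊗[K] TK.obj X),
    v ∈ F X → LinearMap.baseChange B (TK.map f).hom v ∈ F Y
  /-- `G(X)` is a `U`-linear subspace of `Hom_L(T_L(X), L) ⊗_L B` -/
  G : ∀ X : C, AddSubgroup (B ⊗[L] Module.Dual L (TL.obj X))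
  G_smul : ∀ (X : C) (u : U) (γ : B ⊗[L] Module.Dual L (TL.obj X)), γ ∈ G X → (u : B) • γ ∈ G X
  /-- `(T_L(f))^∨ ⊗ id_B` maps `G(Y)` into `G(X)`; `G(f)` is its restriction -/
  G_map : ∀ {X Y : C} (f : X ⟶ Y) (γ : B ⊗[L] Module.Dual L (TL.obj Y)),
    γ ∈ G Y → LinearMap.baseChange B (LinearMap.dualMap (TL.map f).hom) γ ∈ G X

variable {K L B U C}

/-- The period pairing `⟨ν, γ⟩_H := γ(ϖ_X(ν)) ∈ B`. -/
def PeriodPairing.pair (P : PeriodPairing K L B U C) (X : C)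
    (ν : B ⊗[K] P.TK.obj X) (γ : B ⊗[L] Module.Dual L (P.TL.obj X)) : B :=
  dualEval L B (P.TL.obj X) γ (P.ϖ X ν)

/-- The set `P_H(X) = { ⟨ν, γ⟩_H : ν ∈ F(X), γ ∈ G(X) }` of `H`-periods of `X`. -/
def PeriodPairing.periods (P : PeriodPairing K L B U C) (X : C) : Set B :=
  {b : B | ∃ ν ∈ P.F X, ∃ γ ∈ P.G X, P.pair X ν γ = b}

theorem dualEval_baseChange_dualMap {L B : Type u} [Field L] [CommRing B] [Algebra L B]
    {M N : Type u} [AddCommGroup M] [Module L M] [AddCommGroup N] [Module L N]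
    (f : M →ₗ[L] N) (γ : B ⊗[L] Module.Dual L N) (m : B ⊗[L] M) :
    dualEval L B M (f.dualMap.baseChange B γ) m = dualEval L B N γ (f.baseChange B m) := by
  induction γ with
  | zero => simp
  | add γ₁ γ₂ h₁ h₂ => simp only [map_add, LinearMap.add_apply, h₁, h₂]
  | tmul b φ =>
    induction m with
    | zero => simp
    | add m₁ m₂ h₁ h₂ => simp only [map_add, h₁, h₂]
    | tmul b' v => simp [dualEval]

namespace PeriodPairing

variable (P : PeriodPairing K L B U C)

/- Naturality `⟨ν, G(f) γ⟩ = ⟨F(f) ν, γ⟩` of the pairing, so periods move along any `f` for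
which `G(f)`, resp. `F(f)`, is surjective. -/
theorem pair_baseChange_dualMap {X Y : C} (f : X ⟶ Y) (ν : B ⊗[K] P.TK.obj X)
    (γ : B ⊗[L] Module.Dual L (P.TL.obj Y)) :
    P.pair X ν ((P.TL.map f).hom.dualMap.baseChange B γ)
      = P.pair Y ((P.TK.map f).hom.baseChange B ν) γ := by
  rw [pair, pair, P.ϖ_natural f ν, dualEval_baseChange_dualMap]

theorem periods_subset_of_surjOn_G_map {X Y : C} (f : X ⟶ Y)
    (hf : Set.SurjOn ((P.TL.map f).hom.dualMap.baseChange B) (P.G Y) (P.G X)) :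
    P.periods X ⊆ P.periods Y := by
  rintro _ ⟨ν, hν, _, hδ, rfl⟩
  obtain ⟨γ, hγ, rfl⟩ := hf hδ
  exact ⟨_, P.F_map f ν hν, γ, hγ, (P.pair_baseChange_dualMap f ν γ).symm⟩

theorem periods_subset_of_surjOn_F_map {X Y : C} (f : X ⟶ Y)
    (hf : Set.SurjOn ((P.TK.map f).hom.baseChange B) (P.F X) (P.F Y)) :
    P.periods Y ⊆ P.periods X := by
  rintro _ ⟨_, hw, γ, hγ, rfl⟩
  obtain ⟨ν, hν, rfl⟩ := hf hw
  exact ⟨ν, hν, _, P.G_map f γ hγ, P.pair_baseChange_dualMap f ν γ⟩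

end PeriodPairing

theorem PeriodPairing.periods_of_shortExact_general
    (P : PeriodPairing K L B U C)
    (hF : ∀ S : ShortComplex C, S.ShortExact →
      (∀ v ∈ P.F S.X₁, LinearMap.baseChange B (P.TK.map S.f).hom v = 0 → v = 0) ∧
      (∀ v ∈ P.F S.X₂, LinearMap.baseChange B (P.TK.map S.g).hom v = 0 →
        ∃ v₁ ∈ P.F S.X₁, LinearMap.baseChange B (P.TK.map S.f).hom v₁ = v) ∧
      (∀ w ∈ P.F S.X₃, ∃ v ∈ P.F S.X₂, LinearMap.baseChange B (P.TK.map S.g).hom v = w))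
    (hG : ∀ S : ShortComplex C, S.ShortExact →
      (∀ γ ∈ P.G S.X₃, LinearMap.baseChange B (LinearMap.dualMap (P.TL.map S.g).hom) γ = 0 →
        γ = 0) ∧
      (∀ γ ∈ P.G S.X₂, LinearMap.baseChange B (LinearMap.dualMap (P.TL.map S.f).hom) γ = 0 →
        ∃ γ₃ ∈ P.G S.X₃, LinearMap.baseChange B (LinearMap.dualMap (P.TL.map S.g).hom) γ₃ = γ) ∧
      (∀ δ ∈ P.G S.X₁, ∃ γ ∈ P.G S.X₂,
        LinearMap.baseChange B (LinearMap.dualMap (P.TL.map S.f).hom) γ = δ))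
    (S : ShortComplex C) (hS : S.ShortExact) :
    P.periods S.X₁ ⊆ P.periods S.X₂ ∧ P.periods S.X₃ ⊆ P.periods S.X₂ :=
  ⟨P.periods_subset_of_surjOn_G_map S.f (hG S hS).2.2,
    P.periods_subset_of_surjOn_F_map S.g (hF S hS).2.2⟩

/-- **Periods of sub- and quotient objects.**
Assume `C` is an abelian category, `F` is an exact covariant functor and `G` is an exact
contravariant functor (each carries every short exact sequence `0 → X₁ → X₂ → X₃ → 0` of `C`
to a short exact sequence of `ℚ`-vector spaces, resp. of `U`-vector spaces with arrows
reversed).  Then for every short exact sequence `0 → X₁ → X₂ → X₃ → 0` in `C` one has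
`P_H(X₁) ⊆ P_H(X₂)` and `P_H(X₃) ⊆ P_H(X₂)`. -/
theorem PeriodPairing.periods_of_shortExact
    [CharZero K] [CharZero L] [Nontrivial B]
    (P : PeriodPairing K L B U C)
    (hF : ∀ S : ShortComplex C, S.ShortExact →
      (∀ v ∈ P.F S.X₁, LinearMap.baseChange B (P.TK.map S.f).hom v = 0 → v = 0) ∧
      (∀ v ∈ P.F S.X₂, LinearMap.baseChange B (P.TK.map S.g).hom v = 0 →
        ∃ v₁ ∈ P.F S.X₁, LinearMap.baseChange B (P.TK.map S.f).hom v₁ = v) ∧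
      (∀ w ∈ P.F S.X₃, ∃ v ∈ P.F S.X₂, LinearMap.baseChange B (P.TK.map S.g).hom v = w))
    (hG : ∀ S : ShortComplex C, S.ShortExact →
      (∀ γ ∈ P.G S.X₃, LinearMap.baseChange B (LinearMap.dualMap (P.TL.map S.g).hom) γ = 0 →
        γ = 0) ∧
      (∀ γ ∈ P.G S.X₂, LinearMap.baseChange B (LinearMap.dualMap (P.TL.map S.f).hom) γ = 0 →
        ∃ γ₃ ∈ P.G S.X₃, LinearMap.baseChange B (LinearMap.dualMap (P.TL.map S.g).hom) γ₃ = γ) ∧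
      (∀ δ ∈ P.G S.X₁, ∃ γ ∈ P.G S.X₂,
        LinearMap.baseChange B (LinearMap.dualMap (P.TL.map S.f).hom) γ = δ))
    (S : ShortComplex C) (hS : S.ShortExact) :
    P.periods S.X₁ ⊆ P.periods S.X₂ ∧ P.periods S.X₃ ⊆ P.periods S.X₂ :=
  PeriodPairing.periods_of_shortExact_general P hF hG S hS
end
end
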